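/- Let n > 1 be odd, 0 ≤ ℓ ≤ (n-1)/2, and let k satisfy (n-1)/2 + ℓ < k ≤ n-1. Then the rational function (q^(2-4ℓ);q^4)_k / (q^4;q^4)_k is congruent to 0 modulo Φ_n(q^2), i.e., its numerator in lowest terms is divisible by Φ_n(q)Φ_n(-q). -/

import Mathlib

open Polynomial

noncomputable def q : RatFunc ℚ := RatFunc.X

/-- q-shifted factorial (x; s)_k = ∏_{j<k} (1 - x s^j). -/
noncomputable def qp (x s : RatFunc ℚ) (k : ℕ) : RatFunc ℚ :=
  ∏ j ∈ Finset.range k, (1 - x * s ^ j)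

/-- Congruence of rational functions modulo a polynomial: the difference can be
written as a ratio of polynomials with denominator coprime to P and numerator
divisible by P. -/
def modCong (x y : RatFunc ℚ) (P : Polynomial ℚ) : Prop :=
  ∃ r s : Polynomial ℚ, IsCoprime s P ∧ P ∣ r ∧
    x - y = algebraMap (Polynomial ℚ) (RatFunc ℚ) r / algebraMap (Polynomial ℚ) (RatFunc ℚ) s

/-! Multiplying numerator and denominator by `q ^ (4ℓk)` turns both q-shifted factorials into
polynomials. The numerator then contains the factor `q ^ (4ℓ) (1 - q ^ (2n))` (at
`j = (n-1)/2 + ℓ`), which `Φ_n(q²) = Φ_{2n}(q) Φ_n(q)` divides. The denominator is a power of `q`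
times factors `1 - q ^ (4(j+1))` with `j + 1 < n`; as `n` is odd, neither `n` nor `2n` divides
`4(j+1)`, so no primitive `n`-th or `2n`-th root of unity is a root of the denominator. -/

open Finset

lemma dvd_of_cyclotomic_dvd_one_sub_X_pow {d N : ℕ} (hd : d ≠ 0)
    (h : cyclotomic d ℚ ∣ (1 - X ^ N : ℚ[X])) : d ∣ N := by
  have hζ := Complex.isPrimitiveRoot_exp d hd
  have hroot : aeval (Complex.exp (2 * Real.pi * Complex.I / d)) (cyclotomic d ℚ) = 0 := by
    rw [aeval_def, eval₂_eq_eval_map, map_cyclotomic]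
    exact hζ.isRoot_cyclotomic (Nat.pos_of_ne_zero hd)
  have hpow := aeval_eq_zero_of_dvd_aeval_eq_zero h hroot
  rw [map_sub, map_one, map_pow, aeval_X, sub_eq_zero] at hpow
  exact (hζ.pow_eq_one_iff_dvd N).mp hpow.symm

lemma isCoprime_one_sub_X_pow_cyclotomic {d N : ℕ} (hd : d ≠ 0) (hdN : ¬ d ∣ N) :
    IsCoprime (1 - X ^ N : ℚ[X]) (cyclotomic d ℚ) :=
  ((cyclotomic.irreducible_rat (Nat.pos_of_ne_zero hd)).coprime_iff_not_dvd.mpr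
    (mt (dvd_of_cyclotomic_dvd_one_sub_X_pow hd) hdN)).symm

lemma isCoprime_X_cyclotomic {K : Type*} [Field K] {d : ℕ} (hd : 1 < d) :
    IsCoprime (X : K[X]) (cyclotomic d K) :=
  irreducible_X.coprime_iff_not_dvd.mpr <| by
    rw [X_dvd_iff, cyclotomic_coeff_zero K hd]
    exact one_ne_zero

lemma isCoprime_X_pow_mul_prod_one_sub_X_pow_cyclotomic {ι : Type*} {d : ℕ} (hd : 1 < d)
    (a : ℕ) (s : Finset ι) (e : ι → ℕ) (he : ∀ j ∈ s, ¬ d ∣ e j) :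
    IsCoprime (X ^ a * ∏ j ∈ s, (1 - X ^ e j) : ℚ[X]) (cyclotomic d ℚ) :=
  (isCoprime_X_cyclotomic hd).pow_left.mul_left <|
    IsCoprime.prod_left fun j hj => isCoprime_one_sub_X_pow_cyclotomic (by omega) (he j hj)

lemma cyclotomic_comp_X_pow_dvd (R : Type*) [CommRing R] (n m : ℕ) :
    (cyclotomic n R).comp (X ^ m) ∣ X ^ (m * n) - 1 := by
  simpa [← expand_eq_comp_X_pow, pow_mul] using
    map_dvd (expand R m) (cyclotomic.dvd_X_pow_sub_one n R)

lemma q_pow_mul_qp (a b c k : ℕ) :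
    q ^ (c * k) * qp (q ^ ((a : ℤ) - c)) (q ^ b) k =
      algebraMap ℚ[X] (RatFunc ℚ) (∏ j ∈ range k, (X ^ c - X ^ (a + b * j))) := by
  have hq : q ≠ 0 := RatFunc.X_ne_zero
  rw [qp, pow_mul]
  nth_rw 1 [← card_range k]
  rw [pow_card_mul_prod, map_prod]
  refine prod_congr rfl fun j _ => ?_
  have hc : q ^ c * q ^ ((a : ℤ) - c) = q ^ a := by
    rw [← zpow_natCast, ← zpow_add₀ hq, add_sub_cancel, zpow_natCast]
  simp only [map_sub, map_pow, RatFunc.algebraMap_X]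
  rw [mul_sub, mul_one, ← mul_assoc, hc, pow_add, pow_mul]
  rfl

lemma qp_q_pow (a b k : ℕ) :
    qp (q ^ a) (q ^ b) k = algebraMap ℚ[X] (RatFunc ℚ) (∏ j ∈ range k, (1 - X ^ (a + b * j))) := by
  simpa using q_pow_mul_qp a b 0 k

theorem stmt14_general (n : ℕ) (hodd : Odd n) (ℓ : ℕ)
    (k : ℕ) (hk1 : (n - 1) / 2 + ℓ < k) (hk2 : k ≤ n - 1) :
    modCong (qp (q ^ ((2 : ℤ) - 4 * ℓ)) (q ^ 4) k / qp (q ^ 4) (q ^ 4) k) 0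
      ((cyclotomic n ℚ).comp (X ^ 2)) := by
  have hn_not_dvd : ∀ j < k, ¬ n ∣ 4 + 4 * j := fun j hj h => by
    rw [show 4 + 4 * j = 2 ^ 2 * (j + 1) by ring] at h
    have := Nat.le_of_dvd j.succ_pos
      ((Nat.Coprime.pow_right 2 hodd.coprime_two_right).dvd_of_dvd_mul_left h)
    omega
  have hP : (cyclotomic n ℚ).comp (X ^ 2) = cyclotomic (n * 2) ℚ * cyclotomic n ℚ := by
    rw [← expand_eq_comp_X_pow, cyclotomic_expand_eq_cyclotomic_mul Nat.prime_two
      (Nat.two_dvd_ne_zero.mpr (Nat.odd_iff.mp hodd))]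
  refine ⟨∏ j ∈ range k, (X ^ (4 * ℓ) - X ^ (2 + 4 * j)),
    X ^ (4 * ℓ * k) * ∏ j ∈ range k, (1 - X ^ (4 + 4 * j)), ?_, ?_, ?_⟩
  · rw [hP]
    refine IsCoprime.mul_right ?_ ?_ <;>
      refine isCoprime_X_pow_mul_prod_one_sub_X_pow_cyclotomic (by omega) _ _ _ fun j hj => ?_
    · exact fun h => hn_not_dvd j (mem_range.mp hj) ((dvd_mul_right n 2).trans h)
    · exact hn_not_dvd j (mem_range.mp hj)
  · have hfactor : (X : ℚ[X]) ^ (4 * ℓ) - X ^ (2 + 4 * ((n - 1) / 2 + ℓ)) =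
        -(X ^ (4 * ℓ) * (X ^ (2 * n) - 1)) := by
      obtain ⟨m, rfl⟩ := hodd
      rw [show 2 + 4 * ((2 * m + 1 - 1) / 2 + ℓ) = 4 * ℓ + 2 * (2 * m + 1) by omega]
      ring
    refine dvd_trans ?_ (dvd_prod_of_mem _ (mem_range.mpr hk1))
    rw [hfactor]
    exact (dvd_mul_of_dvd_right (cyclotomic_comp_X_pow_dvd ℚ n 2) _).neg_right
  · rw [sub_zero, map_mul, ← qp_q_pow, map_pow, RatFunc.algebraMap_X, ← q_pow_mul_qp 2 4 (4 * ℓ)]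
    push_cast
    exact (mul_div_mul_left _ _ (pow_ne_zero _ RatFunc.X_ne_zero)).symm

theorem stmt14 (n : ℕ) (hodd : Odd n) (hn : 1 < n) (ℓ : ℕ) (hℓ : ℓ ≤ (n - 1) / 2)
    (k : ℕ) (hk1 : (n - 1) / 2 + ℓ < k) (hk2 : k ≤ n - 1) :
    modCong (qp (q ^ ((2 : ℤ) - 4 * ℓ)) (q ^ 4) k / qp (q ^ 4) (q ^ 4) k) 0
      ((cyclotomic n ℚ).comp (X ^ 2)) :=
  stmt14_general n hodd ℓ k hk1 hk2
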